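/- Let C be a model category with class of weak equivalences W and localization functor P : C → Ho(C). Then every morphism of Ho(C) can be written in the form P(h)⁻¹ ∘ P(g) ∘ P(f)⁻¹, where f, g, h are morphisms of C such that f and h are weak equivalences (so that P(f) and P(h) are isomorphisms in Ho(C)). -/

import Mathlib

open CategoryTheory


namespace PolyHomology

/-- `f` is a retract of `g` in the arrow category. -/
def IsRetractOf {C : Type*} [CategoryTheory.Category C] {A B U V : C}
    (f : A ⟶ B) (g : U ⟶ V) : Prop :=
  ∃ (i : A ⟶ U) (r : U ⟶ A) (i' : B ⟶ V) (r' : V ⟶ B),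
    i ≫ r = CategoryTheory.CategoryStruct.id A ∧ i' ≫ r' = CategoryTheory.CategoryStruct.id B ∧
      i ≫ g = f ≫ i' ∧ g ≫ r' = r ≫ f

/-- A Quillen model structure on a category: classes of weak equivalences, fibrations
and cofibrations, satisfying two-out-of-three, stability under retracts, the lifting
axioms and the factorization axioms. (A model category is a complete and cocomplete
category equipped with such a structure.) -/
structure ModelStructure (C : Type*) [CategoryTheory.Category C] where
  weq : CategoryTheory.MorphismProperty C
  fib : CategoryTheory.MorphismProperty C
  cof : CategoryTheory.MorphismProperty C
  weq_comp : ∀ {X Y Z : C} (f : X ⟶ Y) (g : Y ⟶ Z), weq f → weq g → weq (f ≫ g)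
  weq_of_precomp : ∀ {X Y Z : C} (f : X ⟶ Y) (g : Y ⟶ Z), weq f → weq (f ≫ g) → weq g
  weq_of_postcomp : ∀ {X Y Z : C} (f : X ⟶ Y) (g : Y ⟶ Z), weq g → weq (f ≫ g) → weq f
  weq_retract : ∀ {A B U V : C} (f : A ⟶ B) (g : U ⟶ V), IsRetractOf f g → weq g → weq f
  fib_retract : ∀ {A B U V : C} (f : A ⟶ B) (g : U ⟶ V), IsRetractOf f g → fib g → fib f
  cof_retract : ∀ {A B U V : C} (f : A ⟶ B) (g : U ⟶ V), IsRetractOf f g → cof g → cof f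
  lift_cof_trivFib : ∀ {A B U V : C} (i : A ⟶ B) (p : U ⟶ V),
    cof i → fib p → weq p → CategoryTheory.HasLiftingProperty i p
  lift_trivCof_fib : ∀ {A B U V : C} (i : A ⟶ B) (p : U ⟶ V),
    cof i → weq i → fib p → CategoryTheory.HasLiftingProperty i p
  factor_cof_trivFib : ∀ {X Y : C} (f : X ⟶ Y),
    ∃ (Z : C) (i : X ⟶ Z) (p : Z ⟶ Y), cof i ∧ fib p ∧ weq p ∧ i ≫ p = f
  factor_trivCof_fib : ∀ {X Y : C} (f : X ⟶ Y),
    ∃ (Z : C) (i : X ⟶ Z) (p : Z ⟶ Y), cof i ∧ weq i ∧ fib p ∧ i ≫ p = f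

end PolyHomology
namespace PolyHomology

universe v u

variable {C : Type u} [Category.{v} C]

lemma ModelStructure.weq_id (S : ModelStructure C) (X : C) : S.weq (𝟙 X) := by
  obtain ⟨Z, i, p, _, hwi, _, _⟩ := S.factor_trivCof_fib (𝟙 X)
  exact S.weq_of_postcomp (𝟙 X) i hwi (by simpa using hwi)

lemma ModelStructure.weq_of_rlp_cof (S : ModelStructure C) {P A : C} (p' : P ⟶ A)
    (h : ∀ {X Y : C} (i : X ⟶ Y), S.cof i → HasLiftingProperty i p') : S.weq p' := by
  obtain ⟨Z, i, p, hci, hfp, hwp, hip⟩ := S.factor_cof_trivFib p'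
  haveI := h i hci
  have sq : CommSq (𝟙 P) i p' p := ⟨by simp [hip]⟩
  exact S.weq_retract p' p ⟨i, sq.lift, 𝟙 _, 𝟙 _, sq.fac_left, by simp, by simp [hip],
    by simp [sq.fac_right]⟩ hwp

lemma ModelStructure.weq_of_llp_fib (S : ModelStructure C) {X Y : C} (q' : X ⟶ Y)
    (h : ∀ {U V : C} (p : U ⟶ V), S.fib p → HasLiftingProperty q' p) : S.weq q' := by
  obtain ⟨Z, j, p, _, hwj, hfp, hjp⟩ := S.factor_trivCof_fib q'
  haveI := h p hfp
  have sq : CommSq j q' p (𝟙 Y) := ⟨by simp [hjp]⟩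
  exact S.weq_retract q' j ⟨𝟙 _, 𝟙 _, sq.lift, p, by simp, sq.fac_right,
    by simp [sq.fac_left], by simp [hjp]⟩ hwj

open Limits in
lemma ModelStructure.weq_pullback_fst (S : ModelStructure C) [Limits.HasLimits C]
    {a b c : C} (g : a ⟶ b) (q : c ⟶ b) (hfq : S.fib q) (hwq : S.weq q) :
    S.weq (pullback.fst g q) := by
  apply S.weq_of_rlp_cof
  intro X Y i hi
  haveI := S.lift_cof_trivFib i q hi hfq hwq
  constructor
  intro u v sq
  have sq2 : CommSq (u ≫ pullback.snd g q) i q (v ≫ g) := ⟨by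
    rw [Category.assoc, ← pullback.condition, ← Category.assoc, sq.w, Category.assoc]⟩
  exact ⟨⟨⟨pullback.lift v sq2.lift sq2.fac_right.symm,
    by apply pullback.hom_ext <;> simp [sq.w, sq2.fac_left, pullback.lift_fst, pullback.lift_snd, pullback.lift_fst_assoc, pullback.lift_snd_assoc], by simp [pullback.lift_fst]⟩⟩⟩

open Limits in
lemma ModelStructure.weq_pushout_inr (S : ModelStructure C) [Limits.HasColimits C]
    {c d m : C} (j : c ⟶ m) (g : c ⟶ d) (hcj : S.cof j) (hwj : S.weq j) :
    S.weq (pushout.inr j g) := by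
  apply S.weq_of_llp_fib
  intro U V p hp
  haveI := S.lift_trivCof_fib j p hcj hwj hp
  constructor
  intro u v sq
  have sq2 : CommSq (g ≫ u) j p (pushout.inl j g ≫ v) := ⟨by
    rw [Category.assoc, sq.w, ← Category.assoc, ← pushout.condition, Category.assoc]⟩
  exact ⟨⟨⟨pushout.desc sq2.lift u sq2.fac_left,
    by simp [pushout.inr_desc], by apply pushout.hom_ext <;> simp [sq2.fac_right, sq.w, pushout.inl_desc_assoc, pushout.inr_desc_assoc]⟩⟩⟩



/-- The three-arrow property on the localized category. -/
def ModelStructure.threeArrow (S : ModelStructure C) : MorphismProperty S.weq.Localization :=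
  fun Z₁ Z₂ φ =>
    ∃ (c₁ c₂ : C) (h₁ : S.weq.Q.obj c₁ = Z₁) (h₂ : S.weq.Q.obj c₂ = Z₂)
      (c₁' c₂' : C) (f : c₁' ⟶ c₁) (g : c₁' ⟶ c₂') (h : c₂ ⟶ c₂'),
      S.weq f ∧ S.weq h ∧
        S.weq.Q.map f ≫ eqToHom h₁ ≫ φ ≫ eqToHom h₂.symm ≫ S.weq.Q.map h = S.weq.Q.map g

open Limits in
lemma ModelStructure.threeArrow_comp (S : ModelStructure C)
    [Limits.HasLimits C] [Limits.HasColimits C]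
    {Z₁ Z₂ Z₃ : S.weq.Localization} (φ : Z₁ ⟶ Z₂) (ψ : Z₂ ⟶ Z₃)
    (hφ : S.threeArrow φ) (hψ : S.threeArrow ψ) : S.threeArrow (φ ≫ ψ) := by
  obtain ⟨x, y, rfl, rfl, a₁, b₁, f₁, g₁, h₁, hwf₁, hwh₁, E₁⟩ := hφ
  obtain ⟨y', z, hy', rfl, a₂, b₂, f₂, g₂, h₂, hwf₂, hwh₂, E₂⟩ := hψ
  obtain rfl : y' = y := (Localization.Construction.objEquiv S.weq).injective hy'
  simp only [eqToHom_refl, Category.id_comp, Category.comp_id] at E₁ E₂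
  -- factor w = f₂ ≫ h₁ as triv cof j followed by fib q
  obtain ⟨m, j, q, hcj, hwj, hfq, hjq⟩ := S.factor_trivCof_fib (f₂ ≫ h₁)
  have hwq : S.weq q := S.weq_of_precomp j q hwj (by rw [hjq]; exact S.weq_comp _ _ hwf₂ hwh₁)
  set u := pullback.fst g₁ q with hu
  set v := pullback.snd g₁ q with hv
  have hwu : S.weq u := S.weq_pullback_fst g₁ q hfq hwq
  have hwinr : S.weq (pushout.inr j g₂) := S.weq_pushout_inr j g₂ hcj hwj
  refine ⟨x, z, rfl, rfl, pullback g₁ q, pushout j g₂, u ≫ f₁, v ≫ pushout.inl j g₂,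
    h₂ ≫ pushout.inr j g₂, S.weq_comp _ _ hwu hwf₁, S.weq_comp _ _ hwh₂ hwinr, ?_⟩
  haveI : IsIso (S.weq.Q.map f₁) := S.weq.Q_inverts f₁ hwf₁
  haveI : IsIso (S.weq.Q.map h₁) := S.weq.Q_inverts h₁ hwh₁
  haveI : IsIso (S.weq.Q.map f₂) := S.weq.Q_inverts f₂ hwf₂
  haveI : IsIso (S.weq.Q.map h₂) := S.weq.Q_inverts h₂ hwh₂
  haveI : IsIso (S.weq.Q.map j) := S.weq.Q_inverts j hwj
  have hφ' : φ = inv (S.weq.Q.map f₁) ≫ S.weq.Q.map g₁ ≫ inv (S.weq.Q.map h₁) := by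
    rw [IsIso.eq_inv_comp, IsIso.eq_comp_inv]
    rw [← Category.assoc] at E₁
    exact E₁
  have hψ' : ψ = inv (S.weq.Q.map f₂) ≫ S.weq.Q.map g₂ ≫ inv (S.weq.Q.map h₂) := by
    rw [IsIso.eq_inv_comp, IsIso.eq_comp_inv]
    rw [← Category.assoc] at E₂
    exact E₂
  have e3 : S.weq.Q.map u ≫ S.weq.Q.map g₁ = S.weq.Q.map v ≫ S.weq.Q.map q := by
    rw [← Functor.map_comp, ← Functor.map_comp, pullback.condition]
  have e4 : S.weq.Q.map (pushout.inl j g₂) =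
      inv (S.weq.Q.map j) ≫ S.weq.Q.map g₂ ≫ S.weq.Q.map (pushout.inr j g₂) := by
    rw [IsIso.eq_inv_comp, ← Functor.map_comp, ← Functor.map_comp, pushout.condition]
  have e5 : S.weq.Q.map q = inv (S.weq.Q.map j) ≫ S.weq.Q.map f₂ ≫ S.weq.Q.map h₁ := by
    rw [IsIso.eq_inv_comp, ← Functor.map_comp, ← Functor.map_comp, hjq]
  simp only [eqToHom_refl, Category.id_comp, Category.comp_id, Functor.map_comp, Category.assoc,
    hφ', hψ', IsIso.hom_inv_id_assoc, IsIso.inv_hom_id_assoc]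
  rw [reassoc_of% e3, e5, e4]
  simp

lemma ModelStructure.threeArrow_eq_top (S : ModelStructure C)
    [Limits.HasLimits C] [Limits.HasColimits C] : S.threeArrow = ⊤ := by
  haveI : S.threeArrow.IsStableUnderComposition :=
    ⟨fun φ ψ hφ hψ => S.threeArrow_comp φ ψ hφ hψ⟩
  apply Localization.Construction.morphismProperty_eq_top
  · intro X Y f
    exact ⟨X, Y, rfl, rfl, X, Y, 𝟙 X, f, 𝟙 Y, S.weq_id X, S.weq_id Y, by simp⟩
  · intro X Y w hw
    refine ⟨Y, X, rfl, rfl, X, X, w, 𝟙 X, 𝟙 X, hw, S.weq_id X, ?_⟩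
    simp only [eqToHom_refl, Category.id_comp, Category.comp_id, CategoryTheory.Functor.map_id]
    exact (Localization.Construction.wIso w hw).hom_inv_id



/-- **Statement 8.** Let `C` be a model category with weak equivalences `W` and
localization functor `P : C ⟶ Ho(C)`. Every morphism of `Ho(C)` can be written as
`P(h)⁻¹ ∘ P(g) ∘ P(f)⁻¹` with `f, h` weak equivalences; equivalently, for each
morphism `φ` of the localization there are `f, g, h` with `f, h ∈ W` such that
`P(f) ≫ φ ≫ P(h) = P(g)` (and `P(f)` and `P(h)` are isomorphisms). -/
theorem localization_three_arrow (C : Type u) [Category.{v} C]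
    [Limits.HasLimits C] [Limits.HasColimits C] (S : ModelStructure C)
    (Z₁ Z₂ : S.weq.Localization) (φ : Z₁ ⟶ Z₂) :
    ∃ (c₁ c₂ : C) (h₁ : S.weq.Q.obj c₁ = Z₁) (h₂ : S.weq.Q.obj c₂ = Z₂)
      (c₁' c₂' : C) (f : c₁' ⟶ c₁) (g : c₁' ⟶ c₂') (h : c₂ ⟶ c₂'),
      S.weq f ∧ S.weq h ∧ IsIso (S.weq.Q.map f) ∧ IsIso (S.weq.Q.map h) ∧
        S.weq.Q.map f ≫ eqToHom h₁ ≫ φ ≫ eqToHom h₂.symm ≫ S.weq.Q.map h =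
          S.weq.Q.map g := by
  have hφ : S.threeArrow φ := by
    rw [S.threeArrow_eq_top]
    exact MorphismProperty.top_apply φ
  obtain ⟨c₁, c₂, h₁, h₂, c₁', c₂', f, g, h, hwf, hwh, E⟩ := hφ
  exact ⟨c₁, c₂, h₁, h₂, c₁', c₂', f, g, h, hwf, hwh,
    S.weq.Q_inverts f hwf, S.weq.Q_inverts h hwh, E⟩

end PolyHomology
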